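/- arXiv:2303.14021 — 3 statements merged into one kernel-verified Lean document; each statement's English description precedes it below -/
import Mathlib

section
/- Assume the standing assumptions on f and g. Let α > 0, ε ≥ 0, let x_t ∈ X and let x_{t+1} be an ε-minimizer of z ↦ f(z) + (1/(2α))‖z − (x_t − α∇g(x_t))‖². Then for every x ∈ X: (f+g)(x) − (f+g)(x_{t+1}) ≥ ⟨(x_t − x_{t+1})/α, x − x_{t+1}⟩ − (ρ/2)‖x − x_{t+1}‖² − (L_g/2)‖x_t − x_{t+1}‖² − ε − √(2ε/α)·‖x − x_{t+1}‖. -/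
/-!
Test the `ε`-minimality of `x₁` against the points `l • x + (1 - l) • x₁`, `l ∈ (0, 1]`, and
bound `f` there by weak convexity. Dividing by `l`, the first-order quantity `A` collecting
`f x - f x₁`, `ρ/2 ‖x - x₁‖²` and `⟪x₁ - y, x - x₁⟫ / α`, where `y = x₀ - α ∇g(x₀)`,
satisfies `-A ≤ ε / l + l ‖x - x₁‖² / (2α)`; optimising in `l` yields the error
`ε + √(2ε/α) ‖x - x₁‖`.
The smooth part is absorbed by the gradient inequality of the convex `g` at `x₀` together with
the descent lemma for its `L_g`-Lipschitz gradient between `x₀` and `x₁`.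
-/

open Set Filter Topology AffineMap
open scoped RealInnerProductSpace

lemma neg_le_of_forall_mem_Ioc_quadratic_nonneg {A q ε : ℝ} (hq : 0 ≤ q) (hε : 0 ≤ ε)
    (h : ∀ l ∈ Ioc (0 : ℝ) 1, 0 ≤ l * A + l ^ 2 * q + ε) :
    -A ≤ ε + 2 * √(q * ε) := by
  rcases le_or_gt q ε with hqε | hεq
  · have hq_le : q ≤ √(q * ε) := Real.le_sqrt_of_sq_le (by nlinarith)
    linarith [h 1 (right_mem_Ioc.2 one_pos)]
  rcases hε.eq_or_lt with rfl | hε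
  · have hlim : Tendsto (fun l : ℝ => -(l * q)) (𝓝[>] 0) (𝓝 0) := by
      have hcont : Continuous fun l : ℝ => -(l * q) := by fun_prop
      exact (hcont.tendsto' 0 0 (by simp)).mono_left nhdsWithin_le_nhds
    have hev : ∀ᶠ l in 𝓝[>] (0 : ℝ), -(l * q) ≤ A := by
      filter_upwards [Ioc_mem_nhdsGT one_pos] with l hl
      nlinarith [h l hl, hl.1]
    simpa using le_of_tendsto hlim hev
  · -- `l = √(ε / q)` minimises `ε / l + l q`
    have hq : 0 < q := hε.trans hεq
    set l := √(ε / q)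
    have hl : l ∈ Ioc (0 : ℝ) 1 :=
      ⟨Real.sqrt_pos.2 (by positivity), Real.sqrt_le_one.2 ((div_le_one hq).2 hεq.le)⟩
    have hl2 : l ^ 2 * q = ε := by rw [Real.sq_sqrt (by positivity)]; field_simp
    have hlq : l * q = √(q * ε) := by
      rw [← hl2, ← Real.sqrt_sq (by positivity : 0 ≤ l * q)]; congr 1; ring
    have := h l hl
    nlinarith [hl.1]

lemma EReal.ne_top_of_add_coe_le_add_coe {a b : EReal} {c d : ℝ} (h : a + c ≤ b + d)
    (hb : b ≠ ⊤) : a ≠ ⊤ := by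
  rintro rfl
  rw [EReal.top_add_coe, top_le_iff] at h
  exact EReal.add_ne_top hb (EReal.coe_ne_top d) h

section InnerProductSpace

variable {X : Type*} [NormedAddCommGroup X] [InnerProductSpace ℝ X]

lemma norm_smul_add_one_sub_smul_sub_sq (x x₁ y : X) (l : ℝ) :
    ‖l • x + (1 - l) • x₁ - y‖ ^ 2
      = ‖x₁ - y‖ ^ 2 + 2 * l * ⟪x₁ - y, x - x₁⟫ + l ^ 2 * ‖x - x₁‖ ^ 2 := by
  have : l • x + (1 - l) • x₁ - y = (x₁ - y) + l • (x - x₁) := by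
    simp only [sub_smul, one_smul, smul_sub]; abel
  rw [this, norm_add_sq_real, real_inner_smul_right, norm_smul, mul_pow, Real.norm_eq_abs, sq_abs]
  ring

lemma quadratic_nonneg_of_weaklyConvex_of_proxMinimizer {f : X → EReal} {ρ α ε r r₁ : ℝ}
    {x x₁ y : X} (hρ : 0 ≤ ρ) (hx : f x = r) (hx₁ : f x₁ = r₁)
    (hwc : ∀ l : ℝ, 0 ≤ l → l ≤ 1 →
      f (l • x + (1 - l) • x₁) ≤ ((l : ℝ) : EReal) * f x + ((1 - l : ℝ) : EReal) * f x₁ +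
        ((l * (1 - l) * (ρ / 2) * ‖x - x₁‖ ^ 2 : ℝ) : EReal))
    (hmin : ∀ z : X, f x₁ + ((1 / (2 * α) * ‖x₁ - y‖ ^ 2 : ℝ) : EReal) ≤
      f z + ((1 / (2 * α) * ‖z - y‖ ^ 2 + ε : ℝ) : EReal))
    {l : ℝ} (hl0 : 0 ≤ l) (hl1 : l ≤ 1) :
    0 ≤ l * (r - r₁ + ρ / 2 * ‖x - x₁‖ ^ 2 + α⁻¹ * ⟪x₁ - y, x - x₁⟫)
      + l ^ 2 * (‖x - x₁‖ ^ 2 / (2 * α)) + ε := by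
  have hz := (hmin (l • x + (1 - l) • x₁)).trans (add_le_add_left (hwc l hl0 hl1) _)
  rw [hx, hx₁] at hz
  have hreal : r₁ + 1 / (2 * α) * ‖x₁ - y‖ ^ 2 ≤ l * r + (1 - l) * r₁
      + l * (1 - l) * (ρ / 2) * ‖x - x₁‖ ^ 2
      + (1 / (2 * α) * ‖l • x + (1 - l) • x₁ - y‖ ^ 2 + ε) := by
    exact_mod_cast hz
  rw [norm_smul_add_one_sub_smul_sub_sq] at hreal
  linear_combination
    hreal + (1 / 2 : ℝ) * mul_nonneg (mul_nonneg (sq_nonneg l) hρ) (sq_nonneg ‖x - x₁‖)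

end InnerProductSpace

section Gradient

variable {X : Type*} [NormedAddCommGroup X] [InnerProductSpace ℝ X] [CompleteSpace X]
  {g : X → ℝ} {g' : X → X}

lemma HasGradientAt.hasDerivAt_comp_lineMap {x a b : X} (hg : HasGradientAt g (g' x) x) {t : ℝ}
    (ht : lineMap a b t = x) :
    HasDerivAt (fun s => g (lineMap a b s)) ⟪g' x, b - a⟫ t := by
  subst ht
  simpa [Function.comp_def] using hg.hasFDerivAt.comp_hasDerivAt t hasDerivAt_lineMap

lemma ConvexOn.add_inner_gradient_le (hg : ConvexOn ℝ univ g) {a : X}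
    (hga : HasGradientAt g (g' a) a) (b : X) :
    g a + ⟪g' a, b - a⟫ ≤ g b := by
  have hline : ConvexOn ℝ univ (fun s => g (lineMap a b s)) := hg.comp_affineMap (lineMap a b)
  have hslope := hline.le_slope_of_hasDerivAt (mem_univ 0) (mem_univ 1) one_pos
    (hga.hasDerivAt_comp_lineMap (lineMap_apply_zero a b))
  simp only [slope_def_field, lineMap_apply_zero, lineMap_apply_one, sub_zero, div_one] at hslope
  linarith

lemma le_add_inner_gradient_add_sq_of_lipschitz {L : ℝ} (hg : ∀ x, HasGradientAt g (g' x) x)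
    (hL : ∀ x y, ‖g' x - g' y‖ ≤ L * ‖x - y‖) (a b : X) :
    g b ≤ g a + ⟪g' a, b - a⟫ + L / 2 * ‖b - a‖ ^ 2 := by
  set v := b - a
  have hφ (t : ℝ) : HasDerivAt (fun s => g (lineMap a b s)) ⟪g' (lineMap a b t), v⟫ t :=
    (hg _).hasDerivAt_comp_lineMap rfl
  have hB (t : ℝ) : HasDerivAt (fun s => g a + s * ⟪g' a, v⟫ + L / 2 * (s ^ 2 * ‖v‖ ^ 2))
      (⟪g' a, v⟫ + L * (t * ‖v‖ ^ 2)) t := by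
    refine ((((hasDerivAt_id t).mul_const ⟪g' a, v⟫).const_add (g a)).add
      (((hasDerivAt_pow 2 t).mul_const (‖v‖ ^ 2)).const_mul (L / 2))).congr_deriv ?_
    simp only [one_mul, Nat.cast_ofNat, Nat.add_one_sub_one, pow_one, add_right_inj]; ring
  have hbound : ∀ t ∈ Ico (0 : ℝ) 1, ⟪g' (lineMap a b t), v⟫ ≤ ⟪g' a, v⟫ + L * (t * ‖v‖ ^ 2) := by
    intro t ht
    have hgap : ‖g' (lineMap a b t) - g' a‖ ≤ L * (t * ‖v‖) := by
      simpa [lineMap_apply_module', norm_smul, abs_of_nonneg ht.1] using hL (lineMap a b t) a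
    calc ⟪g' (lineMap a b t), v⟫ = ⟪g' a, v⟫ + ⟪g' (lineMap a b t) - g' a, v⟫ := by
          rw [inner_sub_left]; ring
      _ ≤ ⟪g' a, v⟫ + ‖g' (lineMap a b t) - g' a‖ * ‖v‖ := by
          gcongr; exact real_inner_le_norm _ _
      _ ≤ ⟪g' a, v⟫ + L * (t * ‖v‖) * ‖v‖ := by gcongr
      _ = ⟪g' a, v⟫ + L * (t * ‖v‖ ^ 2) := by ring
  have := image_le_of_deriv_right_le_deriv_boundary
    (fun t _ => (hφ t).continuousAt.continuousWithinAt) (fun t _ => (hφ t).hasDerivWithinAt)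
    (by simp) (fun t _ => (hB t).continuousAt.continuousWithinAt)
    (fun t _ => (hB t).hasDerivWithinAt) hbound (right_mem_Icc.2 zero_le_one)
  simpa using this

end Gradient

theorem stmt_7_general {X : Type*} [NormedAddCommGroup X] [InnerProductSpace ℝ X] [CompleteSpace X]
    (f : X → EReal) (g : X → ℝ) (g' : X → X) (ρ Lg : ℝ) (hρ : 0 ≤ ρ)
    (hf_proper : (∃ x, f x ≠ ⊤) ∧ ∀ x, f x ≠ ⊥)
    (hf_wc : ∀ x y : X, ∀ l : ℝ, 0 ≤ l → l ≤ 1 →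
      f (l • x + (1 - l) • y) ≤ ((l : ℝ) : EReal) * f x + ((1 - l : ℝ) : EReal) * f y +
        ((l * (1 - l) * (ρ / 2) * ‖x - y‖ ^ 2 : ℝ) : EReal))
    (hg_conv : ConvexOn ℝ Set.univ g)
    (hg_diff : ∀ x, HasGradientAt g (g' x) x)
    (hg_lip : ∀ x y, ‖g' x - g' y‖ ≤ Lg * ‖x - y‖)
    (α ε : ℝ) (hα : 0 < α) (hε : 0 ≤ ε)
    (x₀ x₁ : X)
    (hx₁ : ∀ z : X,
      f x₁ + ((1 / (2 * α) * ‖x₁ - (x₀ - α • g' x₀)‖ ^ 2 : ℝ) : EReal) ≤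
      f z + ((1 / (2 * α) * ‖z - (x₀ - α • g' x₀)‖ ^ 2 + ε : ℝ) : EReal)) :
    ∀ x : X,
      f x₁ + ((g x₁ + ⟪(α⁻¹ : ℝ) • (x₀ - x₁), x - x₁⟫ - (ρ / 2) * ‖x - x₁‖ ^ 2
          - (Lg / 2) * ‖x₀ - x₁‖ ^ 2 - ε - Real.sqrt (2 * ε / α) * ‖x - x₁‖ : ℝ) : EReal)
        ≤ f x + ((g x : ℝ) : EReal) := by
  intro x
  obtain ⟨⟨z₀, hz₀⟩, hf_ne_bot⟩ := hf_proper
  have hx₁_top : f x₁ ≠ ⊤ := EReal.ne_top_of_add_coe_le_add_coe (hx₁ z₀) hz₀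
  obtain ⟨r₁, hr₁⟩ : ∃ r : ℝ, f x₁ = r := ⟨_, (EReal.coe_toReal hx₁_top (hf_ne_bot x₁)).symm⟩
  by_cases hx_top : f x = ⊤
  · simp [hx_top]
  obtain ⟨r, hr⟩ : ∃ r : ℝ, f x = r := ⟨_, (EReal.coe_toReal hx_top (hf_ne_bot x)).symm⟩
  set y := x₀ - α • g' x₀
  have hprox := neg_le_of_forall_mem_Ioc_quadratic_nonneg (by positivity) hε fun l hl =>
    quadratic_nonneg_of_weaklyConvex_of_proxMinimizer hρ hr hr₁ (hf_wc x x₁) hx₁ hl.1.le hl.2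
  have hsqrt : √(‖x - x₁‖ ^ 2 / (2 * α) * ε) = √(2 * ε / α) * ‖x - x₁‖ / 2 := by
    rw [Real.sqrt_eq_iff_mul_self_eq (by positivity) (by positivity), ← pow_two, div_pow,
      mul_pow, Real.sq_sqrt (by positivity)]
    field_simp
  have hinner : α⁻¹ * ⟪x₁ - y, x - x₁⟫
      = ⟪g' x₀, x - x₀⟫ - ⟪g' x₀, x₁ - x₀⟫ - ⟪α⁻¹ • (x₀ - x₁), x - x₁⟫ := by
    have hy : x₁ - y = -(x₀ - x₁) + α • g' x₀ := by simp only [y]; abel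
    have hx : x - x₁ = (x - x₀) - (x₁ - x₀) := by abel
    rw [hy, inner_add_left, inner_neg_left, real_inner_smul_left, real_inner_smul_left, hx,
      inner_sub_right (g' x₀)]
    field_simp
    ring
  have hconv := hg_conv.add_inner_gradient_le (hg_diff x₀) x
  have hdesc := le_add_inner_gradient_add_sq_of_lipschitz hg_diff hg_lip x₀ x₁
  rw [hr, hr₁, norm_sub_rev x₀ x₁]
  exact_mod_cast (by linarith : r₁ + _ ≤ r + g x)

/-- key estimate for one step of the inexact forward–backward algorithm.
Under the standing assumptions (f proper, lsc, ρ-weakly convex, bounded below; g convex,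
differentiable with L_g-Lipschitz gradient; argmin(f+g) ≠ ∅), if `x₁` is an `ε`-minimizer of
`z ↦ f z + (1/(2α))‖z − (x₀ − α∇g(x₀))‖²`, then for every `x`:
`(f+g)(x) − (f+g)(x₁) ≥ ⟨(x₀−x₁)/α, x−x₁⟩ − (ρ/2)‖x−x₁‖² − (L_g/2)‖x₀−x₁‖² − ε
  − √(2ε/α)‖x−x₁‖`. -/
theorem stmt_7 {X : Type*} [NormedAddCommGroup X] [InnerProductSpace ℝ X] [CompleteSpace X]
    (f : X → EReal) (g : X → ℝ) (g' : X → X) (ρ Lg : ℝ) (hρ : 0 ≤ ρ)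
    (hf_proper : (∃ x, f x ≠ ⊤) ∧ ∀ x, f x ≠ ⊥)
    (hf_lsc : LowerSemicontinuous f)
    (hf_wc : ∀ x y : X, ∀ l : ℝ, 0 ≤ l → l ≤ 1 →
      f (l • x + (1 - l) • y) ≤ ((l : ℝ) : EReal) * f x + ((1 - l : ℝ) : EReal) * f y +
        ((l * (1 - l) * (ρ / 2) * ‖x - y‖ ^ 2 : ℝ) : EReal))
    (hf_bdd : ∃ m : ℝ, ∀ x, ((m : ℝ) : EReal) ≤ f x)
    (hg_conv : ConvexOn ℝ Set.univ g)
    (hg_diff : ∀ x, HasGradientAt g (g' x) x)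
    (hg_lip : ∀ x y, ‖g' x - g' y‖ ≤ Lg * ‖x - y‖)
    (hS : {x : X | ∀ y : X, f x + ((g x : ℝ) : EReal) ≤ f y + ((g y : ℝ) : EReal)}.Nonempty)
    (α ε : ℝ) (hα : 0 < α) (hε : 0 ≤ ε)
    (x₀ x₁ : X)
    (hx₁ : ∀ z : X,
      f x₁ + ((1 / (2 * α) * ‖x₁ - (x₀ - α • g' x₀)‖ ^ 2 : ℝ) : EReal) ≤
      f z + ((1 / (2 * α) * ‖z - (x₀ - α • g' x₀)‖ ^ 2 + ε : ℝ) : EReal)) :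
    ∀ x : X,
      f x₁ + ((g x₁ + ⟪(α⁻¹ : ℝ) • (x₀ - x₁), x - x₁⟫ - (ρ / 2) * ‖x - x₁‖ ^ 2
          - (Lg / 2) * ‖x₀ - x₁‖ ^ 2 - ε - Real.sqrt (2 * ε / α) * ‖x - x₁‖ : ℝ) : EReal)
        ≤ f x + ((g x : ℝ) : EReal) :=
  stmt_7_general f g g' ρ Lg hρ hf_proper hf_wc hg_conv hg_diff hg_lip α ε hα hε x₀ x₁ hx₁
end

section
/- Assume the standing assumptions on f and g, that f+g satisfies the global sharpness condition with constant μ > 0, and that ε and α satisfy the parameter assumption, with E⁻ and E⁺ defined accordingly. Let (x_t) be an inexact forward–backward sequence with constant step size α and accuracy ε. If there exists t₀ ∈ ℕ with E⁻ < dist(x_{t₀},S) < E⁺, then there exists a constant ζ > 1 such that for all t ≥ t₀: dist²(x_t,S) − (E⁻)² ≤ (1/ζ)^{t−t₀}·(dist²(x_{t₀},S) − (E⁻)²). Consequently, limsup_{t→∞} dist(x_t,S) ≤ E⁻. -/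
/-!
For `s ∈ S`, compare the inexact proximal point `x_{t+1}` with a point on the segment from
`x_{t+1}` to `s`; weak convexity of `f`, the descent lemma and the gradient inequality for `g`,
and sharpness of `f + g` give, with `D = dist(x_{t+1}, S)`,
  `2αμD + (1 - α(ρ+1))D² - 2ε(α+1) ≤ ‖s - x_t‖²`.
Taking the infimum over `s`, and since `E⁻, E⁺` are the roots of `α(ρ+1)r² - 2αμr + 2ε(α+1)`,
this is the recursion `D² - α(ρ+1)(D - E⁻)(D - E⁺) ≤ dist(x_t, S)²`. While `D` stays in
`(E⁻, dist(x_{t₀}, S)]` the left-hand side dominates `ζ (D² - (E⁻)²) + (E⁻)²` for a fixed `ζ > 1`,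
so `dist(x_t, S)² - (E⁻)²` decays geometrically until it becomes nonpositive, and the limsup
bound follows.
-/

open Metric Filter Topology
open scoped RealInnerProductSpace

section Gradient

variable {X : Type*} [NormedAddCommGroup X] [InnerProductSpace ℝ X] [CompleteSpace X]
  {g : X → ℝ} {g' : X → X}

theorem HasGradientAt.hasDerivAt_add_smul {u v x' : X} {t : ℝ}
    (h : HasGradientAt g x' (u + t • v)) :
    HasDerivAt (fun τ : ℝ => g (u + τ • v)) ⟪x', v⟫ t := by
  have hline : HasDerivAt (fun τ : ℝ => u + τ • v) v t := by
    simpa using ((hasDerivAt_id t).smul_const v).const_add u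
  have := h.hasFDerivAt.comp_hasDerivAt t hline
  simp only [InnerProductSpace.toDual_apply_apply] at this
  exact this

theorem ConvexOn.add_inner_le_of_hasGradientAt (hg : ConvexOn ℝ Set.univ g) {u w x' : X}
    (h : HasGradientAt g x' u) : g u + ⟪x', w - u⟫ ≤ g w := by
  have hline := hg.comp_affineMap (AffineMap.lineMap (k := ℝ) u w)
  have hL : g ∘ AffineMap.lineMap u w = fun τ : ℝ => g (u + τ • (w - u)) := by
    funext τ
    simp [AffineMap.lineMap_apply_module', add_comm]
  have hder : HasDerivAt (fun τ : ℝ => g (u + τ • (w - u))) ⟪x', w - u⟫ 0 :=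
    HasGradientAt.hasDerivAt_add_smul (by simpa using h)
  rw [Set.preimage_univ, hL] at hline
  have := hline.le_slope_of_hasDerivAt (Set.mem_univ 0) (Set.mem_univ 1) zero_lt_one hder
  simp only [slope_def_field, zero_smul, add_zero, one_smul, add_sub_cancel, sub_zero,
    div_one] at this
  linarith

theorem le_add_inner_add_of_lipschitz_gradient {Lg : ℝ} (hg : ∀ x, HasGradientAt g (g' x) x)
    (hLg : ∀ x y, ‖g' x - g' y‖ ≤ Lg * ‖x - y‖) (u w : X) :
    g w ≤ g u + ⟪g' u, w - u⟫ + Lg / 2 * ‖w - u‖ ^ 2 := by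
  set v := w - u
  set φ : ℝ → ℝ := fun τ => g (u + τ • v) - τ * ⟪g' u, v⟫ - Lg / 2 * ‖v‖ ^ 2 * τ ^ 2
  have hφ : ∀ t, HasDerivAt φ (⟪g' (u + t • v), v⟫ - ⟪g' u, v⟫ - Lg * ‖v‖ ^ 2 * t) t := by
    intro t
    have hlin : HasDerivAt (fun τ : ℝ => τ * ⟪g' u, v⟫) ⟪g' u, v⟫ t := by
      simpa using (hasDerivAt_id t).mul_const ⟪g' u, v⟫
    have hsq : HasDerivAt (fun τ : ℝ => Lg / 2 * ‖v‖ ^ 2 * τ ^ 2)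
        (Lg / 2 * ‖v‖ ^ 2 * (2 * t)) t := by
      simpa using ((hasDerivAt_id t).pow 2).const_mul (Lg / 2 * ‖v‖ ^ 2)
    exact (((hg (u + t • v)).hasDerivAt_add_smul.sub hlin).sub hsq).congr_deriv (by ring)
  have hanti : AntitoneOn φ (Set.Ici 0) := by
    refine antitoneOn_of_hasDerivWithinAt_nonpos (convex_Ici 0)
      (fun t _ => (hφ t).continuousAt.continuousWithinAt)
      (fun t _ => (hφ t).hasDerivWithinAt) ?_
    intro t ht
    rw [interior_Ici] at ht
    have hlip : ‖g' (u + t • v) - g' u‖ ≤ Lg * (t * ‖v‖) := by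
      simpa [norm_smul, abs_of_pos (Set.mem_Ioi.1 ht)] using hLg (u + t • v) u
    have hcs : ⟪g' (u + t • v) - g' u, v⟫ ≤ ‖g' (u + t • v) - g' u‖ * ‖v‖ :=
      real_inner_le_norm _ _
    rw [inner_sub_left] at hcs
    nlinarith [norm_nonneg v]
  have := hanti (Set.mem_Ici.2 le_rfl) (Set.mem_Ici.2 zero_le_one) zero_le_one
  simp only [φ, zero_smul, add_zero, one_smul, v, add_sub_cancel] at this
  linarith

end Gradient

section ProxStep

variable {X : Type*} [NormedAddCommGroup X]

/-- Convexity of `f + (ρ/2)‖·‖²`, written as the equivalent three-point inequality. -/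
def WeaklyConvex [NormedSpace ℝ X] (ρ : ℝ) (f : X → EReal) : Prop :=
  ∀ x y : X, ∀ l : ℝ, 0 ≤ l → l ≤ 1 →
    f (l • x + (1 - l) • y) ≤ ((l : ℝ) : EReal) * f x + ((1 - l : ℝ) : EReal) * f y +
      ((l * (1 - l) * (ρ / 2) * ‖x - y‖ ^ 2 : ℝ) : EReal)

def IsApproxProxPoint (f : X → EReal) (α ε : ℝ) (w v : X) : Prop :=
  ∀ z : X, f v + ((1 / (2 * α) * ‖v - w‖ ^ 2 : ℝ) : EReal) ≤
    f z + ((1 / (2 * α) * ‖z - w‖ ^ 2 + ε : ℝ) : EReal)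

variable {f : X → EReal} {ρ α ε : ℝ} {w v s : X}

theorem IsApproxProxPoint.ne_top (hv : IsApproxProxPoint f α ε w v) (hs : f s ≠ ⊤) :
    f v ≠ ⊤ := by
  intro htop
  have := hv s
  rw [htop, EReal.top_add_coe, top_le_iff] at this
  exact EReal.add_ne_top hs (EReal.coe_ne_top _) this

variable [InnerProductSpace ℝ X]

theorem IsApproxProxPoint.inner_bound (hf : WeaklyConvex ρ f) (hv : IsApproxProxPoint f α ε w v)
    (hρ : 0 ≤ ρ) (hα : 0 < α) {a b : ℝ} (ha : f v = a) (hb : f s = b) :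
    α * a ≤ α * b + α * (ρ + 1) / 2 * ‖s - v‖ ^ 2 + ⟪v - w, s - v⟫ + ε * (α + 1) := by
  -- This weight turns the error `ε` of the prox step into `ε (α + 1) / α`.
  set l := α / (α + 1)
  have hl : l * (α + 1) = α := div_mul_cancel₀ α (by positivity)
  have hl0 : 0 < l := by positivity
  have hl1 : l ≤ 1 := div_le_one_of_le₀ (by linarith) (by positivity)
  set z := l • s + (1 - l) • v
  have hz : ‖z - w‖ ^ 2 = ‖v - w‖ ^ 2 + 2 * l * ⟪v - w, s - v⟫ + l ^ 2 * ‖s - v‖ ^ 2 := by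
    rw [show z - w = (v - w) + l • (s - v) by simp only [z]; module, norm_add_sq_real,
      real_inner_smul_right, norm_smul, Real.norm_eq_abs, mul_pow, sq_abs]
    ring
  have hfz := hf s v l hl0.le hl1
  rw [ha, hb] at hfz
  norm_cast at hfz
  have hprox : a + 1 / (2 * α) * ‖v - w‖ ^ 2 ≤
      l * b + (1 - l) * a + l * (1 - l) * (ρ / 2) * ‖s - v‖ ^ 2 +
        (1 / (2 * α) * ‖z - w‖ ^ 2 + ε) := by
    have h := (hv z).trans (add_le_add hfz le_rfl)
    rw [ha] at h
    exact_mod_cast h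
  have hprox' : 2 * α * a + ‖v - w‖ ^ 2 ≤ 2 * α * (l * b + (1 - l) * a +
      l * (1 - l) * (ρ / 2) * ‖s - v‖ ^ 2) + ‖v - w‖ ^ 2 + 2 * l * ⟪v - w, s - v⟫ +
      l ^ 2 * ‖s - v‖ ^ 2 + 2 * α * ε := by
    have h := mul_le_mul_of_nonneg_left hprox (by positivity : (0 : ℝ) ≤ 2 * α)
    rw [hz] at h
    field_simp at h
    linarith
  have hcoef : 0 ≤ l * ‖s - v‖ ^ 2 * (α - l + α * l * ρ) := by
    have : l ≤ α := by nlinarith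
    positivity
  refine le_of_mul_le_mul_left ?_ (by positivity : (0 : ℝ) < 2 * l)
  linear_combination hprox' + hcoef - 2 * ε * hl

end ProxStep

section ForwardBackward

variable {X : Type*} [NormedAddCommGroup X] [InnerProductSpace ℝ X] [CompleteSpace X]
  {f : X → EReal} {g : X → ℝ} {g' : X → X} {ρ Lg α ε : ℝ} {u v s : X}

theorem IsApproxProxPoint.forwardBackward_bound (hf : WeaklyConvex ρ f) (hρ : 0 ≤ ρ) (hα : 0 < α)
    (hg_conv : ConvexOn ℝ Set.univ g) (hg_diff : ∀ x, HasGradientAt g (g' x) x)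
    (hg_lip : ∀ x y, ‖g' x - g' y‖ ≤ Lg * ‖x - y‖)
    (hv : IsApproxProxPoint f α ε (u - α • g' u) v) {a b : ℝ} (ha : f v = a) (hb : f s = b) :
    2 * α * ((a + g v) - (b + g s)) ≤ ‖s - u‖ ^ 2 - (1 - α * (ρ + 1)) * ‖s - v‖ ^ 2
      - (1 - α * Lg) * ‖v - u‖ ^ 2 + 2 * ε * (α + 1) := by
  have hprox := hv.inner_bound hf hρ hα ha hb
  have hdescent := le_add_inner_add_of_lipschitz_gradient hg_diff hg_lip u v
  have hconv := hg_conv.add_inner_le_of_hasGradientAt (w := s) (hg_diff u)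
  have hinner : ⟪v - (u - α • g' u), s - v⟫ = ⟪v - u, s - v⟫ + α * ⟪g' u, s - v⟫ := by
    rw [show v - (u - α • g' u) = (v - u) + α • g' u by abel, inner_add_left,
      real_inner_smul_left]
  have hpolar : ‖s - u‖ ^ 2 = ‖v - u‖ ^ 2 + 2 * ⟪v - u, s - v⟫ + ‖s - v‖ ^ 2 := by
    rw [show s - u = (v - u) + (s - v) by abel, norm_add_sq_real]
  have hsplit : ⟪g' u, s - u⟫ = ⟪g' u, s - v⟫ + ⟪g' u, v - u⟫ := by
    rw [← inner_add_right, sub_add_sub_cancel]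
  nlinarith

theorem IsApproxProxPoint.dist_recursion_of_sharp (hf : WeaklyConvex ρ f) (hf_bot : ∀ x, f x ≠ ⊥)
    (hρ : 0 ≤ ρ) (hα : 0 < α) (hαρ : α * (ρ + 1) ≤ 1) (hαL : α * Lg ≤ 1)
    (hg_conv : ConvexOn ℝ Set.univ g) (hg_diff : ∀ x, HasGradientAt g (g' x) x)
    (hg_lip : ∀ x y, ‖g' x - g' y‖ ≤ Lg * ‖x - y‖)
    (hv : IsApproxProxPoint f α ε (u - α • g' u) v) (hf_fin : ∃ x, f x ≠ ⊤)
    (hs : ∀ y, f s + ((g s : ℝ) : EReal) ≤ f y + ((g y : ℝ) : EReal)) {μ r : ℝ}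
    (hsharp : sInf (Set.range fun y => f y + ((g y : ℝ) : EReal)) + ((μ * r : ℝ) : EReal) ≤
      f v + ((g v : ℝ) : EReal))
    (hr : 0 ≤ r) (hrs : r ≤ ‖s - v‖) :
    2 * α * μ * r + (1 - α * (ρ + 1)) * r ^ 2 - 2 * ε * (α + 1) ≤ ‖s - u‖ ^ 2 := by
  have hleast :
      IsLeast (Set.range fun y => f y + ((g y : ℝ) : EReal)) (f s + ((g s : ℝ) : EReal)) :=
    ⟨⟨s, rfl⟩, by rintro _ ⟨y, rfl⟩; exact hs y⟩
  rw [hleast.isGLB.sInf_eq] at hsharp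
  have hs_top : f s ≠ ⊤ := by
    obtain ⟨x, hx⟩ := hf_fin
    intro htop
    have := hs x
    rw [htop, EReal.top_add_coe, top_le_iff] at this
    exact EReal.add_ne_top hx (EReal.coe_ne_top _) this
  lift f v to ℝ using ⟨hv.ne_top hs_top, hf_bot v⟩ with a ha
  lift f s to ℝ using ⟨hs_top, hf_bot s⟩ with b hb
  have hbound := hv.forwardBackward_bound hf hρ hα hg_conv hg_diff hg_lip ha.symm hb.symm
  have hsharp' : b + g s + μ * r ≤ a + g v := by exact_mod_cast hsharp
  have hsq : r ^ 2 ≤ ‖s - v‖ ^ 2 := pow_le_pow_left₀ hr hrs 2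
  nlinarith [sq_nonneg ‖v - u‖]

end ForwardBackward

section QuadraticRecursion

variable {a Em Ep d₀ : ℝ}

theorem le_of_sq_sub_mul_le (ha : 0 < a) (ha1 : a ≤ 1) (hEm : 0 ≤ Em) (h₀ : Em < d₀)
    (h₀' : d₀ < Ep) {D d : ℝ} (hd : 0 ≤ d) (hdd : d ≤ d₀)
    (h : D ^ 2 - a * (D - Em) * (D - Ep) ≤ d ^ 2) : D ≤ d₀ := by
  -- `r ↦ r² - a(r - Em)(r - Ep)` is increasing on `[0, ∞)` and exceeds `r²` at `r = d₀`.
  by_contra! hlt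
  have hroot : 0 < a * ((d₀ - Em) * (Ep - d₀)) := by
    have := mul_pos (sub_pos.2 h₀) (sub_pos.2 h₀')
    positivity
  have hmono : 0 < (1 - a) * (D ^ 2 - d₀ ^ 2) + a * (Em + Ep) * (D - d₀) := by
    have h1 : 0 ≤ (1 - a) * ((D - d₀) * (D + d₀)) :=
      mul_nonneg (by linarith) (mul_nonneg (by linarith) (by linarith))
    have h2 : 0 < a * (Em + Ep) * (D - d₀) := by
      have := sub_pos.2 hlt
      have : 0 < Em + Ep := by linarith
      positivity
    nlinarith
  nlinarith [mul_le_mul hdd hdd hd (hd.trans hdd)]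

theorem mul_sq_sub_sq_le_of_sq_sub_mul_le (ha : 0 < a) (hEm : 0 ≤ Em)
    (h₀ : Em < d₀) (h₀' : d₀ < Ep) {D d : ℝ} (hEmD : Em ≤ D) (hDd : D ≤ d₀)
    (h : D ^ 2 - a * (D - Em) * (D - Ep) ≤ d ^ 2) :
    (1 - a + a * (Em + Ep) / (d₀ + Em)) * (D ^ 2 - Em ^ 2) ≤ d ^ 2 - Em ^ 2 := by
  have hden : 0 < d₀ + Em := by linarith
  -- `D² - a(D - Em)(D - Ep) - Em² = (D - Em)((1 - a)(D + Em) + a(Em + Ep))` and `D + Em ≤ d₀ + Em`.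
  have hratio : a * (Em + Ep) / (d₀ + Em) * (D ^ 2 - Em ^ 2) ≤ a * (Em + Ep) * (D - Em) := by
    rw [div_mul_eq_mul_div, div_le_iff₀ hden]
    have : 0 ≤ a * (Em + Ep) * (D - Em) * (d₀ - D) :=
      mul_nonneg (mul_nonneg (mul_nonneg ha.le (by linarith)) (by linarith)) (by linarith)
    nlinarith
  nlinarith

theorem exists_sq_sub_sq_le_geometric {d : ℕ → ℝ} {t₀ : ℕ} (ha : 0 < a) (ha1 : a ≤ 1)
    (hEm : 0 ≤ Em) (hd : ∀ t, 0 ≤ d t)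
    (hrec : ∀ t, d (t + 1) ^ 2 - a * (d (t + 1) - Em) * (d (t + 1) - Ep) ≤ d t ^ 2)
    (h₀ : Em < d t₀) (h₀' : d t₀ < Ep) :
    ∃ ζ : ℝ, 1 < ζ ∧ ∀ t ≥ t₀, d t ^ 2 - Em ^ 2 ≤ (1 / ζ) ^ (t - t₀) * (d t₀ ^ 2 - Em ^ 2) := by
  set ζ := 1 - a + a * (Em + Ep) / (d t₀ + Em)
  have hζ : 1 < ζ := by
    have : a < a * (Em + Ep) / (d t₀ + Em) := by
      rw [lt_div_iff₀ (by linarith)]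
      nlinarith
    linarith
  have hq : 0 ≤ 1 / ζ := by positivity
  have hC : 0 ≤ d t₀ ^ 2 - Em ^ 2 := by nlinarith
  have key : ∀ k, d (t₀ + k) ≤ d t₀ ∧
      d (t₀ + k) ^ 2 - Em ^ 2 ≤ (1 / ζ) ^ k * (d t₀ ^ 2 - Em ^ 2) := by
    intro k
    induction k with
    | zero => simp
    | succ k ih =>
      obtain ⟨hle, hdecay⟩ := ih
      rw [← add_assoc]
      have hstep := hrec (t₀ + k)
      rcases le_or_gt (d (t₀ + k + 1)) Em with hsmall | hlarge
      · refine ⟨by linarith, ?_⟩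
        have : d (t₀ + k + 1) ^ 2 ≤ Em ^ 2 := pow_le_pow_left₀ (hd _) hsmall 2
        have : 0 ≤ (1 / ζ) ^ (k + 1) * (d t₀ ^ 2 - Em ^ 2) := by positivity
        linarith
      · have hle' := le_of_sq_sub_mul_le ha ha1 hEm h₀ h₀' (hd _) hle hstep
        refine ⟨hle', ?_⟩
        have hcontr := mul_sq_sub_sq_le_of_sq_sub_mul_le ha hEm h₀ h₀' hlarge.le hle' hstep
        calc d (t₀ + k + 1) ^ 2 - Em ^ 2 ≤ 1 / ζ * (d (t₀ + k) ^ 2 - Em ^ 2) := by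
              rw [div_mul_eq_mul_div, one_mul, le_div_iff₀ (by linarith), mul_comm]
              exact hcontr
          _ ≤ 1 / ζ * ((1 / ζ) ^ k * (d t₀ ^ 2 - Em ^ 2)) := by gcongr
          _ = (1 / ζ) ^ (k + 1) * (d t₀ ^ 2 - Em ^ 2) := by ring
  refine ⟨ζ, hζ, fun t ht => ?_⟩
  obtain ⟨k, rfl⟩ := Nat.exists_eq_add_of_le ht
  simpa using (key k).2

theorem limsup_le_of_sq_sub_sq_le_geometric {d : ℕ → ℝ} {E q C : ℝ} {t₀ : ℕ}
    (hd : ∀ t, 0 ≤ d t) (hE : 0 ≤ E) (hq : 0 ≤ q) (hq1 : q < 1)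
    (h : ∀ t ≥ t₀, d t ^ 2 - E ^ 2 ≤ q ^ (t - t₀) * C) :
    limsup d atTop ≤ E := by
  set u : ℕ → ℝ := fun t => Real.sqrt (E ^ 2 + q ^ (t - t₀) * C)
  have hu : Tendsto u atTop (𝓝 E) := by
    have hpow : Tendsto (fun t => q ^ (t - t₀)) atTop (𝓝 0) :=
      (tendsto_pow_atTop_nhds_zero_of_lt_one hq hq1).comp (tendsto_sub_atTop_nat t₀)
    have := ((hpow.mul_const C).const_add (E ^ 2)).sqrt
    rwa [zero_mul, add_zero, Real.sqrt_sq hE] at this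
  have hdu : d ≤ᶠ[atTop] u := by
    filter_upwards [eventually_ge_atTop t₀] with t ht
    exact Real.le_sqrt_of_sq_le (by linarith [h t ht])
  calc limsup d atTop ≤ limsup u atTop :=
        limsup_le_limsup hdu (isCoboundedUnder_le_of_le atTop hd) hu.isBoundedUnder_le
    _ = E := hu.limsup_eq

end QuadraticRecursion

theorem Metric.sq_le_infDist_sq {X : Type*} [PseudoMetricSpace X] {S : Set X} {x : X} {c : ℝ}
    (hS : S.Nonempty) (h : ∀ s ∈ S, c ≤ dist x s ^ 2) : c ≤ infDist x S ^ 2 := by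
  rcases le_or_gt c 0 with hc | hc
  · exact hc.trans (sq_nonneg _)
  · have : Real.sqrt c ≤ infDist x S := (le_infDist hS).2 fun s hs =>
      (Real.sqrt_le_sqrt (h s hs)).trans_eq (Real.sqrt_sq dist_nonneg)
    simpa [Real.sq_sqrt hc.le] using pow_le_pow_left₀ (Real.sqrt_nonneg c) this 2

section Parameters

variable {μ ρ α ε : ℝ}

theorem mul_lt_one_of_lt_min {Lg : ℝ} (hρ : 0 ≤ ρ) (hα : 0 < α)
    (hαub : α < min (1 / Lg) (1 / (ρ + 1))) : α * Lg < 1 ∧ α * (ρ + 1) < 1 := by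
  have hLg : 0 < Lg := by
    by_contra! h
    linarith [min_le_left (1 / Lg) (1 / (ρ + 1)), one_div_nonpos.2 h]
  exact ⟨(lt_div_iff₀ hLg).1 (hαub.trans_le (min_le_left _ _)),
    (lt_div_iff₀ (by linarith)).1 (hαub.trans_le (min_le_right _ _))⟩

theorem two_mul_mul_lt_sq_of_lt {Lg : ℝ} (hρ : 0 ≤ ρ)
    (hεlt : ε < μ ^ 2 / (2 * (ρ + 1)) * min (1 / (Lg + 1)) (1 / (ρ + 2))) :
    2 * ε * (ρ + 1) < μ ^ 2 := by
  have hmin : min (1 / (Lg + 1)) (1 / (ρ + 2)) ≤ 1 :=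
    (min_le_right _ _).trans ((div_le_one (by linarith)).2 (by linarith))
  have := hεlt.trans_le (mul_le_of_le_one_right (by positivity) hmin)
  rw [lt_div_iff₀ (by positivity)] at this
  linarith

theorem discriminant_nonneg_of_le_stepSize (hα : 0 < α) (hε : 2 * ε * (ρ + 1) < μ ^ 2)
    (hαlb : 2 * ε * (ρ + 1) / (μ ^ 2 - 2 * ε * (ρ + 1)) ≤ α) :
    0 ≤ μ ^ 2 - 2 * ε * (ρ + 1) * (α + 1) / α := by
  rw [div_le_iff₀ (by linarith)] at hαlb
  rw [sub_nonneg, div_le_iff₀ hα]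
  linarith

theorem mul_sub_mul_sub_eq_quadratic (hρ : 0 ≤ ρ) (hα : 0 < α)
    (hdisc : 0 ≤ μ ^ 2 - 2 * ε * (ρ + 1) * (α + 1) / α) (r : ℝ) :
    α * (ρ + 1) * (r - (μ - Real.sqrt (μ ^ 2 - 2 * ε * (ρ + 1) * (α + 1) / α)) / (ρ + 1))
      * (r - (μ + Real.sqrt (μ ^ 2 - 2 * ε * (ρ + 1) * (α + 1) / α)) / (ρ + 1))
      = α * (ρ + 1) * r ^ 2 - 2 * α * μ * r + 2 * ε * (α + 1) := by
  have hsq := Real.sq_sqrt hdisc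
  set Δ := Real.sqrt (μ ^ 2 - 2 * ε * (ρ + 1) * (α + 1) / α)
  field_simp
  field_simp at hsq
  linear_combination -hsq

theorem smaller_root_nonneg (hμ : 0 ≤ μ) (hρ : 0 ≤ ρ) (hα : 0 < α) (hε : 0 ≤ ε) :
    0 ≤ (μ - Real.sqrt (μ ^ 2 - 2 * ε * (ρ + 1) * (α + 1) / α)) / (ρ + 1) := by
  have : Real.sqrt (μ ^ 2 - 2 * ε * (ρ + 1) * (α + 1) / α) ≤ μ := by
    refine (Real.sqrt_le_sqrt ?_).trans_eq (Real.sqrt_sq hμ)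
    have : 0 ≤ 2 * ε * (ρ + 1) * (α + 1) / α := by positivity
    linarith
  exact div_nonneg (by linarith) (by linarith)

end Parameters

theorem stmt_11_general {X : Type*} [NormedAddCommGroup X] [InnerProductSpace ℝ X] [CompleteSpace X]
    (f : X → EReal) (g : X → ℝ) (g' : X → X) (ρ Lg : ℝ) (hρ : 0 ≤ ρ)
    (hf_proper : (∃ x, f x ≠ ⊤) ∧ ∀ x, f x ≠ ⊥)
    (hf_wc : ∀ x y : X, ∀ l : ℝ, 0 ≤ l → l ≤ 1 →
      f (l • x + (1 - l) • y) ≤ ((l : ℝ) : EReal) * f x + ((1 - l : ℝ) : EReal) * f y +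
        ((l * (1 - l) * (ρ / 2) * ‖x - y‖ ^ 2 : ℝ) : EReal))
    (hg_conv : ConvexOn ℝ Set.univ g)
    (hg_diff : ∀ x, HasGradientAt g (g' x) x)
    (hg_lip : ∀ x y, ‖g' x - g' y‖ ≤ Lg * ‖x - y‖)
    (S : Set X)
    (hS : S = {x : X | ∀ y : X, f x + ((g x : ℝ) : EReal) ≤ f y + ((g y : ℝ) : EReal)})
    (hSne : S.Nonempty)
    (μ : ℝ) (hμ : 0 < μ)
    (hsharp : ∀ x : X,
      sInf (Set.range fun y : X => f y + ((g y : ℝ) : EReal)) +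
          ((μ * Metric.infDist x S : ℝ) : EReal) ≤ f x + ((g x : ℝ) : EReal))
    (α ε : ℝ) (hα : 0 < α) (hε0 : 0 ≤ ε)
    (hεlt : ε < μ ^ 2 / (2 * (ρ + 1)) * min (1 / (Lg + 1)) (1 / (ρ + 2)))
    (hαlb : 2 * ε * (ρ + 1) / (μ ^ 2 - 2 * ε * (ρ + 1)) ≤ α)
    (hαub : α < min (1 / Lg) (1 / (ρ + 1)))
    (Em Ep : ℝ)
    (hEm : Em = (μ - Real.sqrt (μ ^ 2 - 2 * ε * (ρ + 1) * (α + 1) / α)) / (ρ + 1))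
    (hEp : Ep = (μ + Real.sqrt (μ ^ 2 - 2 * ε * (ρ + 1) * (α + 1) / α)) / (ρ + 1))
    (x : ℕ → X)
    (hseq : ∀ t : ℕ, ∀ z : X,
      f (x (t + 1)) +
          ((1 / (2 * α) * ‖x (t + 1) - (x t - α • g' (x t))‖ ^ 2 : ℝ) : EReal) ≤
        f z + ((1 / (2 * α) * ‖z - (x t - α • g' (x t))‖ ^ 2 + ε : ℝ) : EReal))
    (t₀ : ℕ) (h₀ : Em < Metric.infDist (x t₀) S) (h₀' : Metric.infDist (x t₀) S < Ep) :
    (∃ ζ : ℝ, 1 < ζ ∧ ∀ t ≥ t₀,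
      (Metric.infDist (x t) S) ^ 2 - Em ^ 2 ≤
        (1 / ζ) ^ (t - t₀) * ((Metric.infDist (x t₀) S) ^ 2 - Em ^ 2)) ∧
    Filter.limsup (fun t : ℕ => Metric.infDist (x t) S) Filter.atTop ≤ Em := by
  obtain ⟨hαL, hαρ⟩ := mul_lt_one_of_lt_min hρ hα hαub
  have hdisc := discriminant_nonneg_of_le_stepSize hα (two_mul_mul_lt_sq_of_lt hρ hεlt) hαlb
  have hEm0 : 0 ≤ Em := hEm ▸ smaller_root_nonneg hμ.le hρ hα hε0
  have hrec : ∀ t, infDist (x (t + 1)) S ^ 2 -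
      α * (ρ + 1) * (infDist (x (t + 1)) S - Em) * (infDist (x (t + 1)) S - Ep) ≤
      infDist (x t) S ^ 2 := by
    refine fun t => sq_le_infDist_sq hSne fun s hs => ?_
    have := IsApproxProxPoint.dist_recursion_of_sharp hf_wc hf_proper.2 hρ hα hαρ.le hαL.le hg_conv
      hg_diff hg_lip (hseq t) hf_proper.1 (hS ▸ hs) (hsharp _) infDist_nonneg
      (by rw [norm_sub_rev, ← dist_eq_norm]; exact infDist_le_dist_of_mem hs)
    rw [hEm, hEp, mul_sub_mul_sub_eq_quadratic hρ hα hdisc, dist_comm, dist_eq_norm]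
    linarith
  obtain ⟨ζ, hζ, hgeo⟩ := exists_sq_sub_sq_le_geometric (by positivity) hαρ.le hEm0
    (fun _ => infDist_nonneg) hrec h₀ h₀'
  exact ⟨⟨ζ, hζ, hgeo⟩, limsup_le_of_sq_sub_sq_le_geometric (fun _ => infDist_nonneg) hEm0
    (by positivity) ((div_lt_one (by linarith)).2 hζ) hgeo⟩

/-- Theorem 6.1, first part: under the standing assumptions, global sharpness
of `f+g` with constant `μ > 0`, and the parameter assumptions on `ε` and `α`, for an inexact
forward–backward sequence: if `E⁻ < dist(x_{t₀},S) < E⁺` for some `t₀`, then there is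
`ζ > 1` with `dist²(x_t,S) − (E⁻)² ≤ (1/ζ)^{t−t₀}(dist²(x_{t₀},S) − (E⁻)²)` for all
`t ≥ t₀`; consequently `limsup_{t→∞} dist(x_t,S) ≤ E⁻`. -/
theorem stmt_11 {X : Type*} [NormedAddCommGroup X] [InnerProductSpace ℝ X] [CompleteSpace X]
    (f : X → EReal) (g : X → ℝ) (g' : X → X) (ρ Lg : ℝ) (hρ : 0 ≤ ρ)
    (hf_proper : (∃ x, f x ≠ ⊤) ∧ ∀ x, f x ≠ ⊥)
    (hf_lsc : LowerSemicontinuous f)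
    (hf_wc : ∀ x y : X, ∀ l : ℝ, 0 ≤ l → l ≤ 1 →
      f (l • x + (1 - l) • y) ≤ ((l : ℝ) : EReal) * f x + ((1 - l : ℝ) : EReal) * f y +
        ((l * (1 - l) * (ρ / 2) * ‖x - y‖ ^ 2 : ℝ) : EReal))
    (hf_bdd : ∃ m : ℝ, ∀ x, ((m : ℝ) : EReal) ≤ f x)
    (hg_conv : ConvexOn ℝ Set.univ g)
    (hg_diff : ∀ x, HasGradientAt g (g' x) x)
    (hg_lip : ∀ x y, ‖g' x - g' y‖ ≤ Lg * ‖x - y‖)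
    (S : Set X)
    (hS : S = {x : X | ∀ y : X, f x + ((g x : ℝ) : EReal) ≤ f y + ((g y : ℝ) : EReal)})
    (hSne : S.Nonempty)
    (μ : ℝ) (hμ : 0 < μ)
    (hsharp : ∀ x : X,
      sInf (Set.range fun y : X => f y + ((g y : ℝ) : EReal)) +
          ((μ * Metric.infDist x S : ℝ) : EReal) ≤ f x + ((g x : ℝ) : EReal))
    (α ε : ℝ) (hα : 0 < α) (hε0 : 0 ≤ ε)
    (hεlt : ε < μ ^ 2 / (2 * (ρ + 1)) * min (1 / (Lg + 1)) (1 / (ρ + 2)))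
    (hαlb : 2 * ε * (ρ + 1) / (μ ^ 2 - 2 * ε * (ρ + 1)) ≤ α)
    (hαub : α < min (1 / Lg) (1 / (ρ + 1)))
    (Em Ep : ℝ)
    (hEm : Em = (μ - Real.sqrt (μ ^ 2 - 2 * ε * (ρ + 1) * (α + 1) / α)) / (ρ + 1))
    (hEp : Ep = (μ + Real.sqrt (μ ^ 2 - 2 * ε * (ρ + 1) * (α + 1) / α)) / (ρ + 1))
    (x : ℕ → X)
    (hseq : ∀ t : ℕ, ∀ z : X,
      f (x (t + 1)) +
          ((1 / (2 * α) * ‖x (t + 1) - (x t - α • g' (x t))‖ ^ 2 : ℝ) : EReal) ≤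
        f z + ((1 / (2 * α) * ‖z - (x t - α • g' (x t))‖ ^ 2 + ε : ℝ) : EReal))
    (t₀ : ℕ) (h₀ : Em < Metric.infDist (x t₀) S) (h₀' : Metric.infDist (x t₀) S < Ep) :
    (∃ ζ : ℝ, 1 < ζ ∧ ∀ t ≥ t₀,
      (Metric.infDist (x t) S) ^ 2 - Em ^ 2 ≤
        (1 / ζ) ^ (t - t₀) * ((Metric.infDist (x t₀) S) ^ 2 - Em ^ 2)) ∧
    Filter.limsup (fun t : ℕ => Metric.infDist (x t) S) Filter.atTop ≤ Em :=
  stmt_11_general f g g' ρ Lg hρ hf_proper hf_wc hg_conv hg_diff hg_lip S hS hSne μ hμ hsharp α ε hα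
    hε0 hεlt hαlb hαub Em Ep hEm hEp x hseq t₀ h₀ h₀'
end

section
/- Let 0 < α < 1/2 and y ∈ ℝ, and define h : ℝ → ℝ by h(x) = |x² − 1| + (1/(2α))(x − y)². Then h has a unique global minimizer x*, given by: x* = y/(1+2α) if |y| > 1+2α; x* = y/(1−2α) if |y| < 1−2α; and x* = y/|y| (the sign of y) if 1−2α ≤ |y| ≤ 1+2α. In other words, prox_{α f}(y) = {x*} for f(x) = |x² − 1|. -/
/-!
Write `c = 1 / (2α) > 1`. The objective `|x² - 1| + c (x - y)²` is the maximum of the two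
strictly convex quadratics `±(x² - 1) + c (x - y)²`, with vertices `c y / (c ± 1)`. When
`|y| > 1 + 2α` (resp. `|y| < 1 - 2α`) the vertex of the `+` (resp. `-`) quadratic lies where
`x² ≥ 1` (resp. `x² ≤ 1`), i.e. where that quadratic is the objective, so it is the strict
minimizer. In the middle regime with `y > 0` (the case `y < 0` is symmetric), the `+` vertex lies
left of `1` and the `-` vertex right of it, so the `+` quadratic increases on `[1, ∞)` and the `-`
quadratic decreases on `(-∞, 1]`; both agree with the objective at `1`, hence `1` is the
strict minimizer.
-/

noncomputable def proxObjective (α y x : ℝ) : ℝ := |x ^ 2 - 1| + 1 / (2 * α) * (x - y) ^ 2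

lemma proxObjective_neg (α y x : ℝ) : proxObjective α (-y) (-x) = proxObjective α y x := by
  simp only [proxObjective, neg_sq, ← neg_add', ← sub_eq_add_neg]

section Quadratic

variable {k c y : ℝ}

lemma quadratic_eq_vertex_form (hkc : k + c ≠ 0) (x : ℝ) :
    k * x ^ 2 + c * (x - y) ^ 2 =
      k * (c * y / (k + c)) ^ 2 + c * (c * y / (k + c) - y) ^ 2 +
        (k + c) * (x - c * y / (k + c)) ^ 2 := by
  field_simp
  ring

lemma strictMonoOn_quadratic (hkc : 0 < k + c) :
    StrictMonoOn (fun x ↦ k * x ^ 2 + c * (x - y) ^ 2) (Set.Ici (c * y / (k + c))) := by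
  intro a ha b hb hab
  simp only [quadratic_eq_vertex_form hkc.ne' a, quadratic_eq_vertex_form hkc.ne' b]
  have : (a - c * y / (k + c)) ^ 2 < (b - c * y / (k + c)) ^ 2 :=
    pow_lt_pow_left₀ (by linarith) (sub_nonneg.2 ha) two_ne_zero
  gcongr

lemma strictAntiOn_quadratic (hkc : 0 < k + c) :
    StrictAntiOn (fun x ↦ k * x ^ 2 + c * (x - y) ^ 2) (Set.Iic (c * y / (k + c))) := by
  intro a ha b hb hab
  simp only [quadratic_eq_vertex_form hkc.ne' a, quadratic_eq_vertex_form hkc.ne' b]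
  have : (b - c * y / (k + c)) ^ 2 < (a - c * y / (k + c)) ^ 2 := by
    rw [← neg_sq, ← neg_sq (a - _)]
    exact pow_lt_pow_left₀ (by linarith) (by simp only [neg_sub, sub_nonneg]; exact hb) two_ne_zero
  gcongr

end Quadratic

section Cases

variable {α y : ℝ}

lemma proxObjective_lt_of_one_add_lt_abs (hα : 0 < α) (hy : 1 + 2 * α < |y|) {x : ℝ}
    (hx : x ≠ y / (1 + 2 * α)) :
    proxObjective α y (y / (1 + 2 * α)) < proxObjective α y x := by
  set c := 1 / (2 * α)
  have hvertex : y / (1 + 2 * α) = c * y / (1 + c) := by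
    simp only [c]; field_simp; ring
  have hv : 1 ≤ (y / (1 + 2 * α)) ^ 2 := by
    rw [one_le_sq_iff_one_le_abs, abs_div, abs_of_pos (by linarith : (0 : ℝ) < 1 + 2 * α),
      one_le_div (by linarith)]
    exact hy.le
  have hc : 0 < 1 + c := by positivity
  have hx' : 0 < (1 + c) * (x - c * y / (1 + c)) ^ 2 := by
    rw [hvertex] at hx
    have := sub_ne_zero.2 hx
    positivity
  have hform := quadratic_eq_vertex_form (k := 1) (y := y) hc.ne' x
  have habs := le_abs_self (x ^ 2 - 1)
  simp only [proxObjective, abs_of_nonneg (sub_nonneg.2 hv)]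
  rw [hvertex]
  linarith

lemma proxObjective_lt_of_abs_lt_one_sub (hα : 0 < α) (hα' : α < 1 / 2) (hy : |y| < 1 - 2 * α)
    {x : ℝ} (hx : x ≠ y / (1 - 2 * α)) :
    proxObjective α y (y / (1 - 2 * α)) < proxObjective α y x := by
  set c := 1 / (2 * α)
  have hc : 0 < -1 + c := by
    simp only [c]; rw [lt_neg_add_iff_lt, lt_div_iff₀ (by positivity)]; linarith
  have hvertex : y / (1 - 2 * α) = c * y / (-1 + c) := by
    simp only [c]; field_simp; ring
  have hv : (y / (1 - 2 * α)) ^ 2 ≤ 1 := by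
    rw [sq_le_one_iff_abs_le_one, abs_div, abs_of_pos (by linarith : (0 : ℝ) < 1 - 2 * α),
      div_le_one (by linarith)]
    exact hy.le
  have hx' : 0 < (-1 + c) * (x - c * y / (-1 + c)) ^ 2 := by
    rw [hvertex] at hx
    have := sub_ne_zero.2 hx
    positivity
  have hform := quadratic_eq_vertex_form (k := -1) (y := y) hc.ne' x
  have habs := neg_abs_le (x ^ 2 - 1)
  simp only [proxObjective, abs_of_nonpos (sub_nonpos.2 hv)]
  rw [hvertex]
  linarith

lemma proxObjective_one_lt (hα : 0 < α) (hα' : α < 1 / 2) (hy₁ : 1 - 2 * α ≤ y)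
    (hy₂ : y ≤ 1 + 2 * α) {x : ℝ} (hx : x ≠ 1) :
    proxObjective α y 1 < proxObjective α y x := by
  set c := 1 / (2 * α)
  have hαc : 2 * α * c = 1 := by simp only [c]; field_simp
  have hc₁ : 0 < -1 + c := by
    simp only [c]; rw [lt_neg_add_iff_lt, lt_div_iff₀ (by positivity)]; linarith
  simp only [proxObjective, one_pow, sub_self, abs_zero, zero_add]
  rcases hx.lt_or_gt with hx | hx
  · have hvertex : 1 ≤ c * y / (-1 + c) := by
      rw [le_div_iff₀ hc₁]; nlinarith
    have hquad := strictAntiOn_quadratic (y := y) hc₁ (hx.le.trans hvertex) hvertex hx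
    have habs := neg_abs_le (x ^ 2 - 1)
    simp only at hquad
    linarith
  · have hc₂ : 0 < 1 + c := by linarith
    have hvertex : c * y / (1 + c) ≤ 1 := by
      rw [div_le_one hc₂]; nlinarith
    have hquad := strictMonoOn_quadratic (y := y) hc₂ hvertex (hvertex.trans hx.le) hx
    have habs := le_abs_self (x ^ 2 - 1)
    simp only at hquad
    linarith

lemma proxObjective_sign_lt (hα : 0 < α) (hα' : α < 1 / 2) (hy₁ : 1 - 2 * α ≤ |y|)
    (hy₂ : |y| ≤ 1 + 2 * α) {x : ℝ} (hx : x ≠ y / |y|) :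
    proxObjective α y (y / |y|) < proxObjective α y x := by
  have hy : y ≠ 0 := by rintro rfl; rw [abs_zero] at hy₁; linarith
  rcases hy.lt_or_gt with hy | hy
  · rw [abs_of_neg hy] at hy₁ hy₂ hx ⊢
    rw [div_neg, div_self hy.ne] at hx ⊢
    rw [← proxObjective_neg, ← proxObjective_neg α y x, neg_neg]
    exact proxObjective_one_lt hα hα' hy₁ hy₂ (by contrapose! hx; rw [← hx, neg_neg])
  · rw [abs_of_pos hy] at hy₁ hy₂ hx ⊢
    rw [div_self hy.ne'] at hx ⊢
    exact proxObjective_one_lt hα hα' hy₁ hy₂ hx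

end Cases

lemma forall_le_and_unique_of_forall_ne_lt {β γ : Type*} [LinearOrder γ] {f : β → γ} {a : β}
    (h : ∀ x ≠ a, f a < f x) : (∀ x, f a ≤ f x) ∧ ∀ x, (∀ z, f x ≤ f z) → x = a := by
  refine ⟨fun x ↦ ?_, fun x hx ↦ ?_⟩
  · rcases eq_or_ne x a with rfl | hxa
    · exact le_rfl
    · exact (h x hxa).le
  · by_contra hxa
    exact (h x hxa).not_ge (hx a)

/-- Remark 8.1, explicit proximal operator of `f(x) = |x² − 1|`: for
`0 < α < 1/2` and `y ∈ ℝ`, the function `h(x) = |x² − 1| + (1/(2α))(x − y)²` has a unique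
global minimizer `x*`, given by `x* = y/(1+2α)` if `|y| > 1+2α`, `x* = y/(1−2α)` if
`|y| < 1−2α`, and `x* = y/|y|` otherwise; i.e. `prox_{αf}(y) = {x*}`. -/
theorem stmt_18 (α y : ℝ) (hα0 : 0 < α) (hα : α < 1 / 2)
    (xstar : ℝ)
    (hxstar : xstar =
      if 1 + 2 * α < |y| then y / (1 + 2 * α)
      else if |y| < 1 - 2 * α then y / (1 - 2 * α)
      else y / |y|) :
    (∀ x : ℝ, |xstar ^ 2 - 1| + 1 / (2 * α) * (xstar - y) ^ 2 ≤
      |x ^ 2 - 1| + 1 / (2 * α) * (x - y) ^ 2) ∧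
    (∀ x : ℝ, (∀ z : ℝ, |x ^ 2 - 1| + 1 / (2 * α) * (x - y) ^ 2 ≤
        |z ^ 2 - 1| + 1 / (2 * α) * (z - y) ^ 2) → x = xstar) := by
  refine forall_le_and_unique_of_forall_ne_lt (f := proxObjective α y) fun x hx ↦ ?_
  split_ifs at hxstar with h₁ h₂ <;> subst hxstar
  · exact proxObjective_lt_of_one_add_lt_abs hα0 h₁ hx
  · exact proxObjective_lt_of_abs_lt_one_sub hα0 hα h₂ hx
  · exact proxObjective_sign_lt hα0 hα (not_lt.1 h₂) (not_lt.1 h₁) hx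
end
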